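/- arXiv:1106.5930 — 4 statements merged into one kernel-verified Lean document; each statement's English description precedes it below -/
import Mathlib

section
/- If C is a binary self-dual code of length n with n ≥ 4, then C does not have three pairwise equal coordinates; that is, there do not exist three distinct coordinate positions i₁, i₂, i₃ such that every codeword x ∈ C satisfies x_{i₁} = x_{i₂} = x_{i₃}. -/
open Finset

abbrev Code (n : ℕ) := Submodule (ZMod 2) (Fin n → ZMod 2)

def dotp {n : ℕ} (x y : Fin n → ZMod 2) : ZMod 2 := ∑ i, x i * y i

def dualCode {n : ℕ} (C : Code n) : Code n where
  carrier := {y | ∀ x ∈ C, dotp x y = 0}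
  zero_mem' := by intro x _; simp [dotp]
  add_mem' := by
    intro y z hy hz x hx
    have h1 := hy x hx
    have h2 := hz x hx
    simp only [dotp, Set.mem_setOf_eq] at *
    simp [Pi.add_apply, mul_add, Finset.sum_add_distrib, h1, h2]
  smul_mem' := by
    intro c y hy x hx
    have h1 := hy x hx
    simp only [dotp, Set.mem_setOf_eq] at *
    simp [Pi.smul_apply, smul_eq_mul, mul_left_comm, ← Finset.mul_sum, h1]

def IsSelfDual {n : ℕ} (C : Code n) : Prop := C = dualCode C

def IsSelfOrthogonal {n : ℕ} (C : Code n) : Prop := C ≤ dualCode C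

def wt {n : ℕ} (x : Fin n → ZMod 2) : ℕ := (Finset.univ.filter (fun i => x i ≠ 0)).card

/-! If all codewords agree at the coordinates `i₁` and `i₂`, then `e i₁ + e i₂` is orthogonal
to `C`, so self-duality puts it in `C`; but it takes different values at `i₂` and `i₃`. -/

theorem dotp_single_add_single {n : ℕ} (x : Fin n → ZMod 2) (i j : Fin n) :
    dotp x (Pi.single i 1 + Pi.single j 1) = x i + x j := by
  change dotProduct x _ = _
  rw [dotProduct_add, dotProduct_single_one, dotProduct_single_one]

theorem single_add_single_mem_dualCode {n : ℕ} {C : Code n} {i j : Fin n}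
    (h : ∀ x ∈ C, x i = x j) : Pi.single i 1 + Pi.single j 1 ∈ dualCode C := fun x hx => by
  rw [dotp_single_add_single, CharTwo.add_eq_zero]
  exact h x hx

theorem no_three_equal_coordinates_general {n : ℕ} (C : Code n) (h : IsSelfDual C) :
    ¬ ∃ i₁ i₂ i₃ : Fin n, i₁ ≠ i₂ ∧ i₁ ≠ i₃ ∧ i₂ ≠ i₃ ∧
      ∀ x ∈ C, x i₁ = x i₂ ∧ x i₂ = x i₃ := by
  rintro ⟨i₁, i₂, i₃, h12, h13, h23, hall⟩
  have hmem : Pi.single i₁ 1 + Pi.single i₂ 1 ∈ C :=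
    h ▸ single_add_single_mem_dualCode fun x hx => (hall x hx).1
  have hval := (hall _ hmem).2
  simp [h12.symm, h13.symm, h23.symm] at hval

theorem no_three_equal_coordinates {n : ℕ} (hn : 4 ≤ n) (C : Code n) (h : IsSelfDual C) :
    ¬ ∃ i₁ i₂ i₃ : Fin n, i₁ ≠ i₂ ∧ i₁ ≠ i₃ ∧ i₂ ≠ i₃ ∧
      ∀ x ∈ C, x i₁ = x i₂ ∧ x i₂ = x i₃ :=
  no_three_equal_coordinates_general C h
end

section
/- Let C be a binary self-dual [n = 2k, k] code with n > 2 whose last two coordinates are not identically equal. Let C₀ = {x ∈ C : x_{n-1} = x_n} and let C₁ be the code obtained from C₀ by deleting the last two coordinates. Then C₁ is a binary self-dual code of length n − 2 (i.e., C₁ = C₁^⊥ and dim C₁ = k − 1). -/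
open Finset

def projSum {n : ℕ} (a b : Fin n) : (Fin n → ZMod 2) →ₗ[ZMod 2] ZMod 2 :=
  (LinearMap.proj a : (Fin n → ZMod 2) →ₗ[ZMod 2] ZMod 2) + LinearMap.proj b

/-!
Since `C` is self-dual, `dim C = k`. The functional `x ↦ x a + x b` is nonzero on `C`, so its
kernel `C₀` has dimension `k - 1`. On `C₀` the two deleted coordinates agree, and over `𝔽₂` they
contribute `2 x_a y_a = 0` to inner products, so deleting them preserves inner products and the
punctured code `C₁` is self-orthogonal. Deletion is injective on `C₀`: a kernel element `x` is
supported on `{a, b}` with `x_a = x_b`, and orthogonality to a `y ∈ C` with `y_a ≠ y_b` forces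
`x_a = 0`. Hence `dim C₁ = k - 1`, half of `n - 2`, and a self-orthogonal code of half the
length is self-dual.
-/

open Module

section FiniteDimensional

variable {K V : Type*} [Field K] [AddCommGroup V] [Module K V]

theorem finrank_inf_ker_add_one [FiniteDimensional K V] (W : Submodule K V) (φ : Dual K V)
    {y : V} (hy : y ∈ W) (hφy : φ y ≠ 0) :
    finrank K ↥(W ⊓ LinearMap.ker φ) + 1 = finrank K W := by
  have hψ : φ.domRestrict W ≠ 0 := fun h ↦ hφy (LinearMap.congr_fun h ⟨y, hy⟩)
  rw [← Dual.finrank_ker_add_one_of_ne_zero hψ, LinearMap.ker_domRestrict,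
    ← Submodule.map_comap_subtype, Submodule.finrank_map_subtype_eq]

theorem finrank_map_of_disjoint_ker {V' : Type*} [AddCommGroup V'] [Module K V']
    (f : V →ₗ[K] V') {W : Submodule K V} (hW : Disjoint W (LinearMap.ker f)) :
    finrank K (W.map f) = finrank K W := by
  rw [← LinearMap.range_domRestrict]
  exact LinearMap.finrank_range_of_inj (LinearMap.injective_domRestrict_iff.mpr hW)

end FiniteDimensional

theorem dualCode_eq_orthogonal {n : ℕ} (C : Code n) :
    dualCode C = (Matrix.toBilin' (1 : Matrix (Fin n) (Fin n) (ZMod 2))).orthogonal C := by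
  ext y
  simp [dualCode, LinearMap.BilinForm.mem_orthogonal_iff, Matrix.toBilin'_apply', dotp, dotProduct]

theorem finrank_dualCode {n : ℕ} (C : Code n) :
    finrank (ZMod 2) (dualCode C) = n - finrank (ZMod 2) C := by
  rw [dualCode_eq_orthogonal, LinearMap.BilinForm.finrank_orthogonal
    (LinearMap.BilinForm.nondegenerate_toBilin'_iff_det_ne_zero.mpr (by simp)), finrank_fin_fun]

theorem IsSelfDual.two_mul_finrank {n : ℕ} {C : Code n} (hC : IsSelfDual C) :
    2 * finrank (ZMod 2) C = n := by
  have h := finrank_dualCode C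
  rw [← hC] at h
  have := C.finrank_le
  rw [finrank_fin_fun] at this
  omega

theorem IsSelfOrthogonal.isSelfDual {n : ℕ} {C : Code n} (hC : IsSelfOrthogonal C)
    (hdim : n ≤ 2 * finrank (ZMod 2) C) : IsSelfDual C :=
  Submodule.eq_of_le_of_finrank_le hC (by rw [finrank_dualCode]; omega)

theorem IsSelfDual.dotp_eq_zero {n : ℕ} {C : Code n} (hC : IsSelfDual C) {x y : Fin n → ZMod 2}
    (hx : x ∈ C) (hy : y ∈ C) : dotp x y = 0 := by
  rw [hC] at hy
  exact hy x hx

theorem mem_ker_projSum {n : ℕ} {a b : Fin n} {x : Fin n → ZMod 2} :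
    x ∈ LinearMap.ker (projSum a b) ↔ x a = x b :=
  CharTwo.add_eq_zero

section Puncture

variable {m n : ℕ} (hmn : m + 2 = n) {a b : Fin n} (ha : (a : ℕ) = m) (hb : (b : ℕ) = m + 1)
include hmn ha hb

theorem dotp_eq_dotp_funLeft_castLE_add (x y : Fin n → ZMod 2) :
    dotp x y = dotp (LinearMap.funLeft (ZMod 2) (ZMod 2) (Fin.castLE (show m ≤ n by omega)) x)
      (LinearMap.funLeft (ZMod 2) (ZMod 2) (Fin.castLE (show m ≤ n by omega)) y) +
      x a * y a + x b * y b := by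
  subst hmn
  obtain rfl : a = (Fin.last m).castSucc := Fin.ext ha
  obtain rfl : b = Fin.last (m + 1) := Fin.ext hb
  simp only [dotp, Fin.sum_univ_castSucc]
  rfl

theorem dotp_funLeft_castLE_of_mem_ker {x y : Fin n → ZMod 2}
    (hx : x ∈ LinearMap.ker (projSum a b)) (hy : y ∈ LinearMap.ker (projSum a b)) :
    dotp (LinearMap.funLeft (ZMod 2) (ZMod 2) (Fin.castLE (show m ≤ n by omega)) x)
      (LinearMap.funLeft (ZMod 2) (ZMod 2) (Fin.castLE (show m ≤ n by omega)) y) = dotp x y := by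
  rw [dotp_eq_dotp_funLeft_castLE_add hmn ha hb x y, mem_ker_projSum.mp hx, mem_ker_projSum.mp hy,
    add_assoc, CharTwo.add_self_eq_zero, add_zero]

theorem eq_zero_of_funLeft_castLE_eq_zero {x : Fin n → ZMod 2}
    (hx0 : LinearMap.funLeft (ZMod 2) (ZMod 2) (Fin.castLE (show m ≤ n by omega)) x = 0)
    (hxa : x a = 0) (hxb : x b = 0) : x = 0 := by
  subst hmn
  obtain rfl : a = (Fin.last m).castSucc := Fin.ext ha
  obtain rfl : b = Fin.last (m + 1) := Fin.ext hb
  funext i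
  induction i using Fin.lastCases with
  | last => exact hxb
  | cast i =>
    induction i using Fin.lastCases with
    | last => exact hxa
    | cast j => exact congrFun hx0 j

variable {C : Code n}

theorem isSelfOrthogonal_map_funLeft_castLE (hC : IsSelfDual C) :
    IsSelfOrthogonal ((C ⊓ LinearMap.ker (projSum a b)).map
      (LinearMap.funLeft (ZMod 2) (ZMod 2) (Fin.castLE (show m ≤ n by omega)))) := by
  rintro _ ⟨y, ⟨hyC, hy⟩, rfl⟩ _ ⟨x, ⟨hxC, hx⟩, rfl⟩
  rw [dotp_funLeft_castLE_of_mem_ker hmn ha hb hx hy]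
  exact hC.dotp_eq_zero hxC hyC

theorem disjoint_ker_funLeft_castLE (hC : IsSelfDual C) {y : Fin n → ZMod 2} (hy : y ∈ C)
    (hyab : y a ≠ y b) :
    Disjoint (C ⊓ LinearMap.ker (projSum a b))
      (LinearMap.ker (LinearMap.funLeft (ZMod 2) (ZMod 2) (Fin.castLE (show m ≤ n by omega)))) := by
  refine Submodule.disjoint_def.mpr fun x ⟨hxC, hx⟩ hx0 ↦ ?_
  have hxb : x b = x a := (mem_ker_projSum.mp hx).symm
  have hyx := dotp_eq_dotp_funLeft_castLE_add hmn ha hb y x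
  rw [hC.dotp_eq_zero hy hxC, LinearMap.mem_ker.mp hx0, hxb] at hyx
  simp only [dotp, Pi.zero_apply, mul_zero, sum_const_zero, zero_add] at hyx
  have hprod : (y a + y b) * x a = 0 := by linear_combination -hyx
  have hxa : x a = 0 := (mul_eq_zero.mp hprod).resolve_left (CharTwo.add_eq_zero.not.mpr hyab)
  exact eq_zero_of_funLeft_castLE_eq_zero hmn ha hb hx0 hxa (hxb.trans hxa)

end Puncture

theorem punctured_code_selfdual {k : ℕ} (hk : 2 ≤ k) (C : Code (2*k)) (h : IsSelfDual C)
    (a b : Fin (2*k)) (ha : (a : ℕ) = 2*k-2) (hb : (b : ℕ) = 2*k-1)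
    (hne : ∃ y ∈ C, y a ≠ y b) :
    IsSelfDual (Submodule.map
        (LinearMap.funLeft (ZMod 2) (ZMod 2) (Fin.castLE (show 2*k-2 ≤ 2*k by omega)))
        (C ⊓ LinearMap.ker (projSum a b))) ∧
    Module.finrank (ZMod 2)
      ↥(Submodule.map
        (LinearMap.funLeft (ZMod 2) (ZMod 2) (Fin.castLE (show 2*k-2 ≤ 2*k by omega)))
        (C ⊓ LinearMap.ker (projSum a b))) = k - 1 := by
  obtain ⟨y, hy, hyab⟩ := hne
  have hmn : 2 * k - 2 + 2 = 2 * k := by omega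
  have hb' : (b : ℕ) = 2 * k - 2 + 1 := by omega
  have hdimC := h.two_mul_finrank
  have hdimC₀ := finrank_inf_ker_add_one C (projSum a b) hy
    (by rwa [Ne, ← LinearMap.mem_ker, mem_ker_projSum])
  have hdimC₁ := finrank_map_of_disjoint_ker _ (disjoint_ker_funLeft_castLE hmn ha hb' h hy hyab)
  refine ⟨(isSelfOrthogonal_map_funLeft_castLE hmn ha hb' h).isSelfDual ?_, ?_⟩ <;> omega
end

section
/- Let C₁ be a binary self-dual [2k−2, k−1] code with generator matrix G₁, and let f : Aut(C₁) → GL(k−1, 2) be the homomorphism with G₁P = f(P)G₁. For vectors a, b ∈ 𝔽₂^{k−1}, if aᵀ = f(P)bᵀ for some P ∈ Aut(C₁), then the codes generated by the matrices (G₁ | aᵀ | aᵀ) and (G₁ | bᵀ | bᵀ) are equivalent (via a permutation of the 2k coordinates). -/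
open Finset

def colPerm {r m : ℕ} (σ : Equiv.Perm (Fin m)) (G : Matrix (Fin r) (Fin m) (ZMod 2)) :
    Matrix (Fin r) (Fin m) (ZMod 2) := fun i j => G i (σ j)

def PreservesCode {n : ℕ} (σ : Equiv.Perm (Fin n)) (C : Code n) : Prop :=
  Submodule.map (LinearMap.funLeft (ZMod 2) (ZMod 2) σ) C = C

def extRow {r m : ℕ} (G : Matrix (Fin r) (Fin m) (ZMod 2)) (a : Fin r → ZMod 2)
    (i : Fin r) : Fin (m+2) → ZMod 2 :=
  fun j => if h : (j : ℕ) < m then G i ⟨j, h⟩ else a i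

def extCode {r m : ℕ} (G : Matrix (Fin r) (Fin m) (ZMod 2)) (a : Fin r → ZMod 2) :
    Code (m+2) := Submodule.span (ZMod 2) (Set.range (extRow G a))

/-! Extend `σ ∈ Aut(C₁)` to the `2k` coordinates by fixing the two new ones. Since
`G₁ σ = f(σ) G₁` and `a = f(σ) b`, this permutation maps the generator matrix `(G₁ | a | a)` to
`f(σ) (G₁ | b | b)`. The matrix `f(σ)` is invertible because the rows of `G₁ σ` are independent,
so both matrices have the same row space. -/

namespace Matrix

variable {R K : Type*} [CommRing R] [Field K] {m n : Type*} [Fintype m] [DecidableEq m]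

theorem span_range_row_mul_of_isUnit {M : Matrix m m R} (hM : IsUnit M) (A : Matrix m n R) :
    Submodule.span R (Set.range (M * A).row) = Submodule.span R (Set.range A.row) := by
  have hcomp : (M * A).vecMulLinear = A.vecMulLinear ∘ₗ M.vecMulLinear :=
    LinearMap.ext fun x => (vecMul_vecMul x M A).symm
  have hsurj : LinearMap.range M.vecMulLinear = ⊤ :=
    LinearMap.range_eq_top.mpr (vecMul_surjective_iff_isUnit.mpr hM)
  rw [← range_vecMulLinear, ← range_vecMulLinear, hcomp,
    LinearMap.range_comp_of_range_eq_top _ hsurj]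

theorem isUnit_of_linearIndependent_row_mul {M : Matrix m m K} {A : Matrix m n K}
    (h : LinearIndependent K (M * A).row) : IsUnit M := by
  refine linearIndependent_rows_iff_isUnit.mp (LinearIndependent.of_comp A.vecMulLinear ?_)
  convert h using 1
  ext i j
  simp [vecMul, dotProduct, mul_apply]

end Matrix

theorem linearIndependent_row_colPerm {r m : ℕ} {G : Matrix (Fin r) (Fin m) (ZMod 2)}
    (hG : LinearIndependent (ZMod 2) G.row) (σ : Equiv.Perm (Fin m)) :
    LinearIndependent (ZMod 2) (colPerm σ G).row :=
  hG.map' (LinearEquiv.funCongrLeft (ZMod 2) (ZMod 2) σ).toLinearMap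
    (LinearEquiv.funCongrLeft (ZMod 2) (ZMod 2) σ).ker

theorem map_funLeft_span_range_row {r m : ℕ} (σ : Equiv.Perm (Fin m))
    (G : Matrix (Fin r) (Fin m) (ZMod 2)) :
    (Submodule.span (ZMod 2) (Set.range G.row)).map (LinearMap.funLeft (ZMod 2) (ZMod 2) σ)
      = Submodule.span (ZMod 2) (Set.range (colPerm σ G).row) := by
  rw [Submodule.map_span, ← Set.range_comp]
  rfl

def Equiv.Perm.extendFixingTail {m : ℕ} (σ : Equiv.Perm (Fin m)) (n : ℕ) :
    Equiv.Perm (Fin (m + n)) :=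
  finSumFinEquiv.symm.trans ((Equiv.sumCongr σ (Equiv.refl (Fin n))).trans finSumFinEquiv)

@[simp]
theorem Equiv.Perm.extendFixingTail_castAdd {m : ℕ} (σ : Equiv.Perm (Fin m)) (n : ℕ)
    (i : Fin m) : σ.extendFixingTail n (Fin.castAdd n i) = Fin.castAdd n (σ i) := by
  simp [Equiv.Perm.extendFixingTail]

@[simp]
theorem Equiv.Perm.extendFixingTail_natAdd {m : ℕ} (σ : Equiv.Perm (Fin m)) (n : ℕ)
    (i : Fin n) : σ.extendFixingTail n (Fin.natAdd m i) = Fin.natAdd m i := by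
  simp [Equiv.Perm.extendFixingTail]

theorem colPerm_extendFixingTail_extRow {r m : ℕ} {G : Matrix (Fin r) (Fin m) (ZMod 2)}
    {a b : Fin r → ZMod 2} {σ : Equiv.Perm (Fin m)}
    {M : Matrix (Fin r) (Fin r) (ZMod 2)} (hG : colPerm σ G = M * G) (hab : a = M.mulVec b) :
    colPerm (σ.extendFixingTail 2) (Matrix.of (extRow G a)) = M * Matrix.of (extRow G b) := by
  ext i j
  induction j using Fin.addCases with
  | left j => simpa [colPerm, Matrix.mul_apply, extRow] using congrFun (congrFun hG i) j
  | right j => simp [colPerm, Matrix.mul_apply, extRow, hab, Matrix.mulVec, dotProduct]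

theorem orbit_gives_equivalent_extensions_general {k : ℕ}
    (C₁ : Code (2*k-2))
    (G₁ : Matrix (Fin (k-1)) (Fin (2*k-2)) (ZMod 2))
    (hindep : LinearIndependent (ZMod 2) (fun i => G₁ i))
    (f : Equiv.Perm (Fin (2*k-2)) → Matrix (Fin (k-1)) (Fin (k-1)) (ZMod 2))
    (hf : ∀ σ, PreservesCode σ C₁ → colPerm σ G₁ = f σ * G₁)
    (a b : Fin (k-1) → ZMod 2)
    (σ : Equiv.Perm (Fin (2*k-2))) (hσ : PreservesCode σ C₁)
    (hab : a = (f σ).mulVec b) :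
    ∃ π : Equiv.Perm (Fin (2*k-2+2)),
      Submodule.map (LinearMap.funLeft (ZMod 2) (ZMod 2) π) (extCode G₁ a)
        = extCode G₁ b := by
  have hG := hf σ hσ
  have hunit : IsUnit (f σ) :=
    Matrix.isUnit_of_linearIndependent_row_mul (hG ▸ linearIndependent_row_colPerm hindep σ)
  refine ⟨σ.extendFixingTail 2, ?_⟩
  rw [extCode, extCode, ← Matrix.of_row (extRow G₁ a), ← Matrix.of_row (extRow G₁ b),
    map_funLeft_span_range_row, colPerm_extendFixingTail_extRow hG hab,
    Matrix.span_range_row_mul_of_isUnit hunit]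

theorem orbit_gives_equivalent_extensions {k : ℕ} (hk : 2 ≤ k)
    (C₁ : Code (2*k-2)) (h1 : IsSelfDual C₁)
    (G₁ : Matrix (Fin (k-1)) (Fin (2*k-2)) (ZMod 2))
    (hindep : LinearIndependent (ZMod 2) (fun i => G₁ i))
    (hspan : Submodule.span (ZMod 2) (Set.range (fun i => G₁ i)) = C₁)
    (f : Equiv.Perm (Fin (2*k-2)) → Matrix (Fin (k-1)) (Fin (k-1)) (ZMod 2))
    (hf : ∀ σ, PreservesCode σ C₁ → colPerm σ G₁ = f σ * G₁)
    (a b : Fin (k-1) → ZMod 2)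
    (σ : Equiv.Perm (Fin (2*k-2))) (hσ : PreservesCode σ C₁)
    (hab : a = (f σ).mulVec b) :
    ∃ π : Equiv.Perm (Fin (2*k-2+2)),
      Submodule.map (LinearMap.funLeft (ZMod 2) (ZMod 2) π) (extCode G₁ a)
        = extCode G₁ b :=
  orbit_gives_equivalent_extensions_general C₁ G₁ hindep f hf a b σ hσ hab
end

section
/- Let C₁ be a binary self-dual [2k−2, k−1] code with generator matrix G₁ and let f : Aut(C₁) → GL(k−1, 2) be defined by G₁P = f(P)G₁. If the codes generated by (G₁ | aᵀ | aᵀ) and (G₁ | bᵀ | bᵀ) are equivalent, then a and b lie in the same orbit of the action of Im(f) on 𝔽₂^{k−1} given by A · x = (Axᵀ)ᵀ. -/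
open Finset

/-!
A permutation `π` carrying the code of `(G | aᵀ | aᵀ)` onto that of `(G | bᵀ | bᵀ)` restricts to
an automorphism `σ` of `C₁` with `a = f σ b` as soon as it maps the two appended coordinates onto
themselves; so it suffices to correct `π` by automorphisms of the `a`-extension until it does.
The appended columns are equal. If `π` sends one appended coordinate to an appended one and the
other to a column `u` of `G`, then column `u` of the `a`-extension equals the appended columns, and
swapping it with one of them is an automorphism. If `π` sends both into `G`, to `p` and `q`, then
columns `p` and `q` of `G` are equal, so `e_p + e_q = d G` for some `d` by self-duality. Here
`d · a = 1`: otherwise `π` would carry the codeword `(e_p + e_q | 0 | 0)` to a nonzero codeword of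
the `b`-extension vanishing on the columns of `G`. Hence `(e_p + e_q | 1 | 1)` is a codeword, and
it makes the double transposition exchanging `p, q` with the appended coordinates an automorphism.
-/

open Equiv LinearMap Matrix

section FunLeft

variable {R ι : Type*} [CommSemiring R]

lemma map_funLeft_mul (D : Submodule R (ι → R)) (τ π : Perm ι) :
    D.map (funLeft R R (τ * π)) = (D.map (funLeft R R τ)).map (funLeft R R π) := by
  rw [← Submodule.map_comp, ← funLeft_comp]; rfl

lemma apply_eq_of_map_funLeft_eq {D E : Submodule R (ι → R)} {π : Perm ι}
    (hπ : D.map (funLeft R R π) = E) {u v : ι} (h : ∀ z ∈ E, z u = z v) :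
    ∀ z ∈ D, z (π u) = z (π v) :=
  fun _ hz => h _ (hπ ▸ Submodule.mem_map_of_mem hz)

lemma map_funLeft_swap_of_apply_eq [DecidableEq ι] {D : Submodule R (ι → R)} {u v : ι}
    (h : ∀ z ∈ D, z u = z v) : D.map (funLeft R R (swap u v)) = D := by
  have hfix : ∀ z ∈ D, funLeft R R (swap u v) z = z := fun z hz => by
    ext x
    rw [funLeft_apply, swap_apply_def]
    split_ifs with hxu hxv
    · rw [hxu, h z hz]
    · rw [hxv, h z hz]
    · rfl
  ext y
  constructor
  · rintro ⟨z, hz, rfl⟩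
    rwa [hfix z hz]
  · exact fun hy => ⟨y, hy, hfix y hy⟩

end FunLeft

lemma map_funLeft_eq_of_le {K ι : Type*} [Field K] [Finite ι] {D : Submodule K (ι → K)}
    {π : Perm ι} (h : D.map (funLeft K K π) ≤ D) : D.map (funLeft K K π) = D :=
  Submodule.eq_of_le_of_finrank_le h
    (LinearEquiv.finrank_map_eq (LinearEquiv.funCongrLeft K K π) D).ge

lemma map_funLeft_swap_mul_swap {K ι : Type*} [Field K] [CharP K 2] [DecidableEq ι] [Finite ι]
    {D : Submodule K (ι → K)} {p q s t : ι} (hpq : p ≠ q) (hpt : p ≠ t) (hqs : q ≠ s)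
    (hst : s ≠ t) (hzpq : ∀ z ∈ D, z p = z q) (hzst : ∀ z ∈ D, z s = z t)
    {v : ι → K} (hv : v ∈ D) (hvp : v p = 1) (hvs : v s = 1)
    (hv0 : ∀ x, x ≠ p → x ≠ q → x ≠ s → x ≠ t → v x = 0) :
    D.map (funLeft K K (swap p s * swap q t)) = D := by
  refine map_funLeft_eq_of_le ?_
  rintro _ ⟨z, hz, rfl⟩
  have hvq : v q = 1 := hzpq v hv ▸ hvp
  have hvt : v t = 1 := hzst v hv ▸ hvs
  suffices funLeft K K (swap p s * swap q t) z = z + (z p + z s) • v from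
    this ▸ D.add_mem hz (D.smul_mem _ hv)
  have h2 := CharTwo.add_self_eq_zero (z p)
  have h3 := CharTwo.add_self_eq_zero (z s)
  ext x
  simp only [funLeft_apply, Perm.mul_apply, Pi.add_apply, Pi.smul_apply, smul_eq_mul]
  have hzq := hzpq z hz
  have hzt := hzst z hz
  by_cases hxp : x = p
  · rw [hxp, swap_apply_of_ne_of_ne hpq hpt, swap_apply_left, hvp]
    linear_combination -h2
  by_cases hxq : x = q
  · rw [hxq, swap_apply_left, swap_apply_of_ne_of_ne hpt.symm hst.symm, hvq, ← hzq, ← hzt]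
    linear_combination -h2
  by_cases hxs : x = s
  · rw [hxs, swap_apply_of_ne_of_ne hqs.symm hst, swap_apply_right, hvs]
    linear_combination -h3
  by_cases hxt : x = t
  · rw [hxt, swap_apply_right, swap_apply_of_ne_of_ne hpq.symm hqs, hvt, ← hzq, ← hzt]
    linear_combination -h3
  rw [swap_apply_of_ne_of_ne hxq hxt, swap_apply_of_ne_of_ne hxp hxs, hv0 x hxp hxq hxs hxt,
    mul_zero, add_zero]

lemma Fin.castAdd_ne_natAdd {m n : ℕ} (i : Fin m) (j : Fin n) :
    Fin.castAdd n i ≠ Fin.natAdd m j :=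
  Fin.ne_of_val_ne (by simp only [Fin.coe_castAdd, Fin.coe_natAdd]; omega)

lemma Matrix.mem_span_range_iff_exists_vecMul {R m n : Type*} [CommSemiring R] [Fintype m]
    (M : Matrix m n R) {x : n → R} :
    x ∈ Submodule.span R (Set.range fun i => M i) ↔ ∃ c, c ᵥ* M = x := by
  simp_rw [Submodule.mem_span_range_iff_exists_fun, vecMul_eq_sum]

lemma Matrix.eq_of_mul_eq_mul_of_linearIndependent {R l m n : Type*} [CommRing R] [Fintype m]
    {M : Matrix m n R} (hM : LinearIndependent R fun i => M i) {A B : Matrix l m R}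
    (h : A * M = B * M) : A = B :=
  funext fun i => vecMul_injective_iff.2 hM (congrFun h i)

section ExtCode

variable {r n : ℕ} {G : Matrix (Fin r) (Fin n) (ZMod 2)} {a : Fin r → ZMod 2}

/-- The generator matrix `(G | aᵀ | aᵀ)` of `extCode G a`. -/
def extMatrix (G : Matrix (Fin r) (Fin n) (ZMod 2)) (a : Fin r → ZMod 2) :
    Matrix (Fin r) (Fin (n + 2)) (ZMod 2) :=
  of (extRow G a)

@[simp] lemma vecMul_extMatrix_castAdd (c : Fin r → ZMod 2) (j : Fin n) :
    (c ᵥ* extMatrix G a) (Fin.castAdd 2 j) = (c ᵥ* G) j := by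
  simp [vecMul, dotProduct, extMatrix, extRow]

@[simp] lemma vecMul_extMatrix_natAdd (c : Fin r → ZMod 2) (t : Fin 2) :
    (c ᵥ* extMatrix G a) (Fin.natAdd n t) = c ⬝ᵥ a := by
  simp [vecMul, dotProduct, extMatrix, extRow]

lemma mem_extCode_iff {z : Fin (n + 2) → ZMod 2} :
    z ∈ extCode G a ↔ ∃ c, c ᵥ* extMatrix G a = z :=
  Matrix.mem_span_range_iff_exists_vecMul _

lemma apply_natAdd_eq_of_mem_extCode {z : Fin (n + 2) → ZMod 2} (hz : z ∈ extCode G a)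
    (s t : Fin 2) : z (Fin.natAdd n s) = z (Fin.natAdd n t) := by
  obtain ⟨c, rfl⟩ := mem_extCode_iff.1 hz
  simp

lemma eq_zero_of_mem_extCode (hG : LinearIndependent (ZMod 2) (fun i => G i))
    {z : Fin (n + 2) → ZMod 2} (hz : z ∈ extCode G a) (h0 : ∀ j, z (Fin.castAdd 2 j) = 0) :
    z = 0 := by
  obtain ⟨c, rfl⟩ := mem_extCode_iff.1 hz
  have hc : c = 0 := vecMul_injective_iff.2 hG (by ext j; simpa using h0 j)
  rw [hc, zero_vecMul]

end ExtCode

section Restrict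

variable {n : ℕ}

lemma exists_perm_castAdd_eq (π : Perm (Fin (n + 2)))
    (h : ∀ j, ∃ j', π (Fin.castAdd 2 j) = Fin.castAdd 2 j') :
    ∃ σ : Perm (Fin n), ∀ j, π (Fin.castAdd 2 j) = Fin.castAdd 2 (σ j) := by
  choose g hg using h
  have hg_inj : Function.Injective g := fun j j' hjj' =>
    Fin.castAdd_injective _ _ (π.injective (by rw [hg, hg, hjj']))
  exact ⟨Equiv.ofBijective g hg_inj.bijective_of_finite, hg⟩

lemma castAdd_mapsTo_of_natAdd_mapsTo {π : Perm (Fin (n + 2))}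
    (h : ∀ t, ∃ t', π (Fin.natAdd n t) = Fin.natAdd n t') :
    ∀ j, ∃ j', π (Fin.castAdd 2 j) = Fin.castAdd 2 j' := by
  choose g hg using h
  have hg_surj : Function.Surjective g := Finite.injective_iff_surjective.1 fun t t' htt' =>
    Fin.natAdd_injective _ _ (π.injective (by rw [hg, hg, htt']))
  intro j
  induction hx : π (Fin.castAdd 2 j) using Fin.addCases with
  | left j' => exact ⟨j', rfl⟩
  | right t' =>
    obtain ⟨t, rfl⟩ := hg_surj t'
    exact absurd (π.injective (hx.trans (hg t).symm)) (Fin.castAdd_ne_natAdd j t)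

end Restrict

section Automorphism

variable {r n : ℕ} {C : Code n} {G : Matrix (Fin r) (Fin n) (ZMod 2)}

lemma preservesCode_of_colPerm_eq_mul
    (hspan : Submodule.span (ZMod 2) (Set.range fun i => G i) = C)
    {σ : Perm (Fin n)} {A : Matrix (Fin r) (Fin r) (ZMod 2)} (h : colPerm σ G = A * G) :
    PreservesCode σ C := by
  refine map_funLeft_eq_of_le ?_
  rw [← hspan, Submodule.map_span, Submodule.span_le]
  rintro _ ⟨_, ⟨i, rfl⟩, rfl⟩
  exact (mem_span_range_iff_exists_vecMul G).2 ⟨A i, (congrFun h i).symm⟩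

variable {a b : Fin r → ZMod 2} {π : Perm (Fin (n + 2))}

lemma exists_preservesCode_of_natAdd_mapsTo
    (hspan : Submodule.span (ZMod 2) (Set.range fun i => G i) = C)
    (hG : LinearIndependent (ZMod 2) (fun i => G i))
    {f : Perm (Fin n) → Matrix (Fin r) (Fin r) (ZMod 2)}
    (hf : ∀ σ, PreservesCode σ C → colPerm σ G = f σ * G)
    (hπ : (extCode G a).map (funLeft _ _ π) = extCode G b)
    (hhigh : ∀ t, ∃ t', π (Fin.natAdd n t) = Fin.natAdd n t') :
    ∃ σ, PreservesCode σ C ∧ a = f σ *ᵥ b := by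
  obtain ⟨σ, hσ⟩ := exists_perm_castAdd_eq π (castAdd_mapsTo_of_natAdd_mapsTo hhigh)
  obtain ⟨t', ht'⟩ := hhigh 0
  have hrow : ∀ i, ∃ c, c ᵥ* extMatrix G b = funLeft _ _ π (extRow G a i) := fun i =>
    mem_extCode_iff.1 <| hπ ▸ Submodule.mem_map_of_mem <|
      Submodule.subset_span (Set.mem_range_self i)
  choose A hA using hrow
  have hcol : colPerm σ G = of A * G := by
    ext i j
    change G i (σ j) = (A i ᵥ* G) j
    simpa [hσ, extRow] using (congrFun (hA i) (Fin.castAdd 2 j)).symm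
  have hab : a = of A *ᵥ b := by
    ext i
    change a i = A i ⬝ᵥ b
    simpa [ht', extRow] using (congrFun (hA i) (Fin.natAdd n 0)).symm
  have hσC := preservesCode_of_colPerm_eq_mul hspan hcol
  refine ⟨σ, hσC, ?_⟩
  rw [hab, eq_of_mul_eq_mul_of_linearIndependent hG (hcol.symm.trans (hf σ hσC))]

end Automorphism

lemma single_add_single_mem_of_dualCode_le {n : ℕ} {C : Code n} (hC : dualCode C ≤ C)
    {p q : Fin n} (h : ∀ x ∈ C, x p = x q) : Pi.single p 1 + Pi.single q 1 ∈ C :=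
  hC fun x hx => by
    change x ⬝ᵥ (Pi.single p 1 + Pi.single q 1) = 0
    rw [dotProduct_add, dotProduct_single, dotProduct_single, mul_one, mul_one, h x hx,
      CharTwo.add_self_eq_zero]

section HardCase

variable {r n : ℕ} {G : Matrix (Fin r) (Fin n) (ZMod 2)} {a b : Fin r → ZMod 2}
  {π : Perm (Fin (n + 2))} {p q : Fin n}

lemma single_add_single_apply_of_ne {j : Fin n} (hp : j ≠ p) (hq : j ≠ q) :
    (Pi.single p 1 + Pi.single q 1 : Fin n → ZMod 2) j = 0 := by
  simp [hp, hq]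

lemma vecMul_extMatrix_apply_eq_zero {d : Fin r → ZMod 2}
    (hd : d ᵥ* G = Pi.single p 1 + Pi.single q 1) {x : Fin (n + 2)} (hxp : x ≠ Fin.castAdd 2 p)
    (hxq : x ≠ Fin.castAdd 2 q) (hx0 : x ≠ Fin.natAdd n 0) (hx1 : x ≠ Fin.natAdd n 1) :
    (d ᵥ* extMatrix G a) x = 0 := by
  induction x using Fin.addCases with
  | left j =>
    rw [vecMul_extMatrix_castAdd, hd, single_add_single_apply_of_ne]
    · exact fun h => hxp (h ▸ rfl)
    · exact fun h => hxq (h ▸ rfl)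
  | right t =>
    fin_cases t
    exacts [absurd rfl hx0, absurd rfl hx1]

lemma dotProduct_eq_one_of_vecMul_eq (hG : LinearIndependent (ZMod 2) (fun i => G i))
    (hπ : (extCode G a).map (funLeft _ _ π) = extCode G b)
    (hp : π (Fin.natAdd n 0) = Fin.castAdd 2 p) (hq : π (Fin.natAdd n 1) = Fin.castAdd 2 q)
    (hpq : p ≠ q) {d : Fin r → ZMod 2} (hd : d ᵥ* G = Pi.single p 1 + Pi.single q 1) :
    d ⬝ᵥ a = 1 := by
  by_contra hne
  have hda : d ⬝ᵥ a = 0 := by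
    have : ∀ x : ZMod 2, x ≠ 1 → x = 0 := by decide
    exact this _ hne
  have hz : funLeft _ _ π (d ᵥ* extMatrix G a) ∈ extCode G b :=
    hπ ▸ Submodule.mem_map_of_mem (mem_extCode_iff.2 ⟨d, rfl⟩)
  have hz0 : funLeft _ _ π (d ᵥ* extMatrix G a) = 0 := eq_zero_of_mem_extCode hG hz fun j => by
    rw [funLeft_apply]
    induction hx : π (Fin.castAdd 2 j) using Fin.addCases with
    | left j' =>
      have hne : ∀ t, π (Fin.castAdd 2 j) ≠ π (Fin.natAdd n t) :=
        fun t => π.injective.ne (Fin.castAdd_ne_natAdd j t)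
      rw [vecMul_extMatrix_castAdd, hd, single_add_single_apply_of_ne]
      · rintro rfl; exact hne 0 (hx.trans hp.symm)
      · rintro rfl; exact hne 1 (hx.trans hq.symm)
    | right t => rw [vecMul_extMatrix_natAdd, hda]
  have := congrFun hz0 (Fin.natAdd n 0)
  simp [hp, hd, hpq] at this

end HardCase

section Reduction

variable {r n : ℕ} {C : Code n} {G : Matrix (Fin r) (Fin n) (ZMod 2)} {a b : Fin r → ZMod 2}
  {π : Perm (Fin (n + 2))}

lemma exists_perm_natAdd_mapsTo_of_apply_natAdd_eq
    (hπ : (extCode G a).map (funLeft _ _ π) = extCode G b) {t t' : Fin 2}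
    (h : π (Fin.natAdd n t) = Fin.natAdd n t') :
    ∃ π' : Perm (Fin (n + 2)), (extCode G a).map (funLeft _ _ π') = extCode G b ∧
      ∀ s, ∃ s', π' (Fin.natAdd n s) = Fin.natAdd n s' := by
  have hrev : ∀ s : Fin 2, s.rev ≠ s := by decide
  have hcases : ∀ s t : Fin 2, s = t ∨ s = t.rev := by decide
  set u := π (Fin.natAdd n t.rev)
  set w := Fin.natAdd n t'.rev
  have huw : ∀ z ∈ extCode G a, z u = z w := fun z hz => by
    rw [apply_eq_of_map_funLeft_eq hπ (fun _ hy => apply_natAdd_eq_of_mem_extCode hy _ t) z hz, h]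
    exact apply_natAdd_eq_of_mem_extCode hz _ _
  refine ⟨swap u w * π, by rw [map_funLeft_mul, map_funLeft_swap_of_apply_eq huw, hπ], fun s => ?_⟩
  obtain rfl | rfl := hcases s t
  · refine ⟨t', ?_⟩
    rw [Perm.mul_apply, h, swap_apply_of_ne_of_ne _ ((Fin.natAdd_injective _ _).ne (hrev t').symm)]
    rw [← h]
    exact π.injective.ne ((Fin.natAdd_injective _ _).ne (hrev s).symm)
  · exact ⟨t'.rev, swap_apply_left u w⟩

lemma exists_perm_fixing_natAdd_zero (hC : dualCode C ≤ C)
    (hspan : Submodule.span (ZMod 2) (Set.range fun i => G i) = C)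
    (hG : LinearIndependent (ZMod 2) (fun i => G i))
    (hπ : (extCode G a).map (funLeft _ _ π) = extCode G b)
    (hlow : ∀ t t', π (Fin.natAdd n t) ≠ Fin.natAdd n t') :
    ∃ π' : Perm (Fin (n + 2)), (extCode G a).map (funLeft _ _ π') = extCode G b ∧
      π' (Fin.natAdd n 0) = Fin.natAdd n 0 := by
  have hlow' : ∀ t, ∃ j, π (Fin.natAdd n t) = Fin.castAdd 2 j := fun t => by
    induction hx : π (Fin.natAdd n t) using Fin.addCases with
    | left j => exact ⟨j, rfl⟩
    | right t' => exact absurd hx (hlow t t')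
  obtain ⟨p, hp⟩ := hlow' 0
  obtain ⟨q, hq⟩ := hlow' 1
  have h01 : Fin.natAdd n (0 : Fin 2) ≠ Fin.natAdd n 1 := (Fin.natAdd_injective _ _).ne (by decide)
  have hpq : p ≠ q := by
    rintro rfl
    exact h01 (π.injective (hp.trans hq.symm))
  have hPQ : ∀ z ∈ extCode G a, z (Fin.castAdd 2 p) = z (Fin.castAdd 2 q) := by
    rw [← hp, ← hq]
    exact apply_eq_of_map_funLeft_eq hπ fun _ hy => apply_natAdd_eq_of_mem_extCode hy 0 1
  have hCpq : ∀ x ∈ C, x p = x q := by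
    rw [← hspan]
    rintro _ hx
    obtain ⟨c, rfl⟩ := (mem_span_range_iff_exists_vecMul G).1 hx
    simpa using hPQ _ (mem_extCode_iff.2 ⟨c, rfl⟩)
  obtain ⟨d, hd⟩ := (mem_span_range_iff_exists_vecMul G).1
    (hspan ▸ single_add_single_mem_of_dualCode_le hC hCpq)
  have hda := dotProduct_eq_one_of_vecMul_eq hG hπ hp hq hpq hd
  have hτ := map_funLeft_swap_mul_swap ((Fin.castAdd_injective _ _).ne hpq)
    (Fin.castAdd_ne_natAdd p 1) (Fin.castAdd_ne_natAdd q 0) h01 hPQ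
    (fun _ hz => apply_natAdd_eq_of_mem_extCode hz 0 1) (mem_extCode_iff.2 ⟨d, rfl⟩)
    (by simp [hd, hpq]) (by simpa using hda) fun _ => vecMul_extMatrix_apply_eq_zero hd
  refine ⟨swap (Fin.castAdd 2 p) (Fin.natAdd n 0) * swap (Fin.castAdd 2 q) (Fin.natAdd n 1) * π,
    by rw [map_funLeft_mul, hτ, hπ], ?_⟩
  rw [Perm.mul_apply, hp, Perm.mul_apply,
    swap_apply_of_ne_of_ne ((Fin.castAdd_injective _ _).ne hpq) (Fin.castAdd_ne_natAdd p 1),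
    swap_apply_left]

lemma exists_perm_natAdd_mapsTo (hC : dualCode C ≤ C)
    (hspan : Submodule.span (ZMod 2) (Set.range fun i => G i) = C)
    (hG : LinearIndependent (ZMod 2) (fun i => G i))
    (hπ : (extCode G a).map (funLeft _ _ π) = extCode G b) :
    ∃ π' : Perm (Fin (n + 2)), (extCode G a).map (funLeft _ _ π') = extCode G b ∧
      ∀ s, ∃ s', π' (Fin.natAdd n s) = Fin.natAdd n s' := by
  by_cases h : ∃ t t', π (Fin.natAdd n t) = Fin.natAdd n t'
  · obtain ⟨t, t', h⟩ := h
    exact exists_perm_natAdd_mapsTo_of_apply_natAdd_eq hπ h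
  · simp only [not_exists] at h
    obtain ⟨π', hπ', h0⟩ := exists_perm_fixing_natAdd_zero hC hspan hG hπ h
    exact exists_perm_natAdd_mapsTo_of_apply_natAdd_eq hπ' h0

end Reduction

theorem equivalent_extensions_give_orbit_general {k : ℕ}
    (C₁ : Code (2*k-2)) (h1 : IsSelfDual C₁)
    (G₁ : Matrix (Fin (k-1)) (Fin (2*k-2)) (ZMod 2))
    (hindep : LinearIndependent (ZMod 2) (fun i => G₁ i))
    (hspan : Submodule.span (ZMod 2) (Set.range (fun i => G₁ i)) = C₁)
    (f : Equiv.Perm (Fin (2*k-2)) → Matrix (Fin (k-1)) (Fin (k-1)) (ZMod 2))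
    (hf : ∀ σ, PreservesCode σ C₁ → colPerm σ G₁ = f σ * G₁)
    (a b : Fin (k-1) → ZMod 2)
    (hequiv : ∃ π : Equiv.Perm (Fin (2*k-2+2)),
      Submodule.map (LinearMap.funLeft (ZMod 2) (ZMod 2) π) (extCode G₁ a)
        = extCode G₁ b) :
    ∃ σ : Equiv.Perm (Fin (2*k-2)), PreservesCode σ C₁ ∧ a = (f σ).mulVec b := by
  obtain ⟨π, hπ⟩ := hequiv
  obtain ⟨π', hπ', hhigh⟩ := exists_perm_natAdd_mapsTo h1.ge hspan hindep hπ
  exact exists_preservesCode_of_natAdd_mapsTo hspan hindep hf hπ' hhigh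

theorem equivalent_extensions_give_orbit {k : ℕ} (hk : 2 ≤ k)
    (C₁ : Code (2*k-2)) (h1 : IsSelfDual C₁)
    (G₁ : Matrix (Fin (k-1)) (Fin (2*k-2)) (ZMod 2))
    (hindep : LinearIndependent (ZMod 2) (fun i => G₁ i))
    (hspan : Submodule.span (ZMod 2) (Set.range (fun i => G₁ i)) = C₁)
    (f : Equiv.Perm (Fin (2*k-2)) → Matrix (Fin (k-1)) (Fin (k-1)) (ZMod 2))
    (hf : ∀ σ, PreservesCode σ C₁ → colPerm σ G₁ = f σ * G₁)
    (a b : Fin (k-1) → ZMod 2)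
    (hequiv : ∃ π : Equiv.Perm (Fin (2*k-2+2)),
      Submodule.map (LinearMap.funLeft (ZMod 2) (ZMod 2) π) (extCode G₁ a)
        = extCode G₁ b) :
    ∃ σ : Equiv.Perm (Fin (2*k-2)), PreservesCode σ C₁ ∧ a = (f σ).mulVec b :=
  equivalent_extensions_give_orbit_general C₁ h1 G₁ hindep hspan f hf a b hequiv
end
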